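/- Let G be a connected bipartite graph with bipartition (A,B), 1 ≤ |A| ≤ |B|. If γ(G) = |A|, then α(G) = |B| and β(G) = |A|. -/

import Mathlib

/-! Since `G` is connected with at least two vertices, it has no isolated vertex, so every vertex
cover is a dominating set and `γ(G) ≤ β(G)`. The side `A` is a vertex cover, hence
`|A| = γ(G) ≤ β(G) ≤ |A|`. Finally `α(G) + β(G) = |V|` (complements of independent sets are exactly
the vertex covers), which gives `α(G) = |B|`. -/

open Finset

variable {V : Type} [Fintype V] [DecidableEq V]

def IsDomSet (G : SimpleGraph V) (D : Finset V) : Prop :=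
  ∀ v : V, v ∉ D → ∃ u ∈ D, G.Adj u v

noncomputable def domNum (G : SimpleGraph V) : ℕ :=
  sInf {n | ∃ D : Finset V, IsDomSet G D ∧ D.card = n}

def IsVertexCover (G : SimpleGraph V) (C : Finset V) : Prop :=
  ∀ ⦃u v : V⦄, G.Adj u v → u ∈ C ∨ v ∈ C

noncomputable def coverNum (G : SimpleGraph V) : ℕ :=
  sInf {n | ∃ C : Finset V, IsVertexCover G C ∧ C.card = n}

def IsIndepFinset (G : SimpleGraph V) (I : Finset V) : Prop :=
  ∀ u ∈ I, ∀ v ∈ I, ¬ G.Adj u v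

noncomputable def indepNum (G : SimpleGraph V) : ℕ :=
  sSup {n | ∃ I : Finset V, IsIndepFinset G I ∧ I.card = n}

def IsLeaf (G : SimpleGraph V) [DecidableRel G.Adj] (v : V) : Prop :=
  G.degree v = 1

def IsSupport (G : SimpleGraph V) [DecidableRel G.Adj] (v : V) : Prop :=
  ∃ u, G.Adj v u ∧ IsLeaf G u

def IsWeakSupport (G : SimpleGraph V) [DecidableRel G.Adj] (v : V) : Prop :=
  ((G.neighborFinset v).filter fun l => G.degree l = 1).card = 1

def IsBipartition (G : SimpleGraph V) (A B : Finset V) : Prop :=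
  A ∪ B = Finset.univ ∧ Disjoint A B ∧
    ∀ ⦃u v : V⦄, G.Adj u v → (u ∈ A ∧ v ∈ B) ∨ (u ∈ B ∧ v ∈ A)

section

omit [Fintype V] [DecidableEq V]

variable {G : SimpleGraph V}

lemma IsVertexCover.isDomSet (hG : ∀ v, ∃ u, G.Adj v u) {C : Finset V}
    (hC : IsVertexCover G C) : IsDomSet G C := by
  intro v hv
  obtain ⟨u, hvu⟩ := hG v
  exact ⟨u, (hC hvu.symm).resolve_right hv, hvu.symm⟩

lemma domNum_le_card {D : Finset V} (hD : IsDomSet G D) : domNum G ≤ #D :=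
  Nat.sInf_le ⟨D, hD, rfl⟩

lemma coverNum_le_card {C : Finset V} (hC : IsVertexCover G C) : coverNum G ≤ #C :=
  Nat.sInf_le ⟨C, hC, rfl⟩

end

section

omit [DecidableEq V]

variable {G : SimpleGraph V}

lemma exists_isVertexCover_card_eq_coverNum : ∃ C, IsVertexCover G C ∧ #C = coverNum G :=
  Nat.sInf_mem (s := {n | ∃ C : Finset V, IsVertexCover G C ∧ #C = n})
    ⟨_, univ, fun u _ _ => Or.inl (mem_univ u), rfl⟩

lemma domNum_le_coverNum (hG : ∀ v, ∃ u, G.Adj v u) : domNum G ≤ coverNum G := by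
  obtain ⟨C, hC, hcard⟩ := exists_isVertexCover_card_eq_coverNum (G := G)
  exact hcard ▸ domNum_le_card (hC.isDomSet hG)

lemma bddAbove_indepSizes : BddAbove {n | ∃ I : Finset V, IsIndepFinset G I ∧ #I = n} :=
  ⟨Fintype.card V, by rintro n ⟨I, -, rfl⟩; exact card_le_univ I⟩

lemma card_le_indepNum {I : Finset V} (hI : IsIndepFinset G I) : #I ≤ indepNum G :=
  le_csSup bddAbove_indepSizes ⟨I, hI, rfl⟩

lemma exists_isIndepFinset_card_eq_indepNum : ∃ I, IsIndepFinset G I ∧ #I = indepNum G :=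
  Nat.sSup_mem (s := {n | ∃ I : Finset V, IsIndepFinset G I ∧ #I = n})
    ⟨0, ∅, by simp [IsIndepFinset]⟩ bddAbove_indepSizes

end

section

variable {G : SimpleGraph V}

lemma IsBipartition.card_add_card {A B : Finset V} (h : IsBipartition G A B) :
    #A + #B = Fintype.card V := by
  rw [← card_union_of_disjoint h.2.1, h.1, card_univ]

lemma IsBipartition.isVertexCover_left {A B : Finset V} (h : IsBipartition G A B) :
    IsVertexCover G A := by
  intro u v huv
  rcases h.2.2 huv with ⟨hu, -⟩ | ⟨-, hv⟩
  exacts [Or.inl hu, Or.inr hv]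

lemma isVertexCover_compl_iff {I : Finset V} : IsVertexCover G Iᶜ ↔ IsIndepFinset G I := by
  simp only [IsVertexCover, IsIndepFinset, mem_compl, ← not_and_or]
  exact ⟨fun h u hu v hv huv => h huv ⟨hu, hv⟩, fun h u v huv huv' => h u huv'.1 v huv'.2 huv⟩

lemma indepNum_add_coverNum : indepNum G + coverNum G = Fintype.card V := by
  obtain ⟨C, hC, hCcard⟩ := exists_isVertexCover_card_eq_coverNum (G := G)
  obtain ⟨I, hI, hIcard⟩ := exists_isIndepFinset_card_eq_indepNum (G := G)
  have hindep : #Cᶜ ≤ indepNum G :=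
    card_le_indepNum (isVertexCover_compl_iff.mp (by rwa [compl_compl]))
  have hcover : coverNum G ≤ #Iᶜ := coverNum_le_card (isVertexCover_compl_iff.mpr hI)
  rw [card_compl] at hindep hcover
  have := card_le_univ I
  omega

end

theorem indepNum_and_coverNum_of_domNum_eq_smaller_side (G : SimpleGraph V)
    (A B : Finset V) (hconn : G.Connected) (hbip : IsBipartition G A B)
    (hA : 1 ≤ A.card) (hAB : A.card ≤ B.card) (hdom : domNum G = A.card) :
    indepNum G = B.card ∧ coverNum G = A.card := by
  have hsides := hbip.card_add_card
  have : Nontrivial V := Fintype.one_lt_card_iff_nontrivial.mp (by omega)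
  have hnoIsolated : ∀ v, ∃ u, G.Adj v u := hconn.preconnected.exists_adj_of_nontrivial
  have hcover : coverNum G = #A :=
    le_antisymm (coverNum_le_card hbip.isVertexCover_left) (hdom ▸ domNum_le_coverNum hnoIsolated)
  have := indepNum_add_coverNum (G := G)
  exact ⟨by omega, hcover⟩
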